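/- Theorem 1: Consider the LD-WT-H with parameters n₁, n₂, n_E ∈ ℕ satisfying n₁ ≠ n₂ (so n_Δ > 0). Let n_Q = n_c mod 2n_Δ and define Q = n_Q if n_Q < n_Δ and n₁ ≥ n₂; Q = n_Δ if n_Q ≥ n_Δ and n₁ ≥ n₂; Q = 0 if n_Q < n_Δ and n₁ < n₂; and Q = n_Q − n_Δ if n_Q ≥ n_Δ and n₁ < n₂. Then the secrecy rate R = n_p + ⌊n_c / (2n_Δ)⌋ · n_Δ + Q is achievable for the LD-WT-H. -/

import Mathlib

open MeasureTheory ProbabilityTheory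

/-- Per-use input/output alphabet of the linear deterministic model: bit-vectors in `𝔽₂^q`. -/
abbrev LDVec (q : ℕ) := Fin q → ZMod 2

/-- The `q × q` lower-shift matrix over `𝔽₂` (ones on the first subdiagonal). -/
def shiftMat (q : ℕ) : Matrix (Fin q) (Fin q) (ZMod 2) :=
  Matrix.of fun i j => if (i : ℕ) = (j : ℕ) + 1 then 1 else 0

/-- Deterministic output `S^(q-k₁) x₁ + S^(q-k₂) x₂` of a linear deterministic channel
with channel gains `k₁, k₂` (bit-level shifts), where `+` is componentwise mod-2 addition. -/
def ldOut (q k₁ k₂ : ℕ) (x₁ x₂ : LDVec q) : LDVec q :=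
  ((shiftMat q) ^ (q - k₁)).mulVec x₁ + ((shiftMat q) ^ (q - k₂)).mulVec x₂

/-- Shannon entropy (base 2) of a random variable taking values in a finite type. -/
noncomputable def entropy2 {Ω : Type*} [MeasurableSpace Ω] (μ : Measure Ω)
    {α : Type*} [Fintype α] (X : Ω → α) : ℝ :=
  ∑ a : α, Real.negMulLog ((μ (X ⁻¹' {a})).toReal) / Real.log 2

/-- Mutual information (base 2): `I(X;Y) = H(X) + H(Y) - H(X,Y)`. -/
noncomputable def mutualInfo2 {Ω : Type*} [MeasurableSpace Ω] (μ : Measure Ω)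
    {α β : Type*} [Fintype α] [Fintype β] (X : Ω → α) (Y : Ω → β) : ℝ :=
  entropy2 μ X + entropy2 μ Y - entropy2 μ (fun ω => (X ω, Y ω))

/-- Achievability of a secrecy rate `R` for the linear deterministic wiretap channel with a
helper (LD-WT-H) with parameters `n₁, n₂, nE`: for every `ε > 0` there are a blocklength
`n ≥ 1`, a message `W` uniform on a set of size `k ≥ 2^(nR)`, a (possibly stochastic) encoder
output `X₁ⁿ` (jointly distributed with `W`), a helper input `X₂ⁿ` independent of `(W, X₁ⁿ)`,
and a decoder `g` such that `P(g(Y₁ⁿ) ≠ W) ≤ ε` and `I(W; Y₂ⁿ) ≤ εn`. -/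
def ldWTHAchievable (n₁ n₂ nE : ℕ) (R : ℝ) : Prop :=
  0 ≤ R ∧
  ∀ ε : ℝ, 0 < ε →
    ∃ (n : ℕ), 0 < n ∧
    ∃ (k : ℕ), (2 : ℝ) ^ ((n : ℝ) * R) ≤ (k : ℝ) ∧
    ∃ (Ω : Type) (_ : MeasurableSpace Ω) (μ : Measure Ω) (_ : IsProbabilityMeasure μ)
      (W : Ω → Fin k)
      (X₁ X₂ : Ω → Fin n → LDVec (max (max n₁ n₂) nE))
      (g : (Fin n → LDVec (max (max n₁ n₂) nE)) → Fin k),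
      (∀ m : Fin k, μ (W ⁻¹' {m}) = ((k : ENNReal))⁻¹) ∧
      IndepFun (fun ω => (W ω, X₁ ω)) X₂ μ ∧
      μ {ω | g (fun t => ldOut (max (max n₁ n₂) nE) n₁ n₂ (X₁ ω t) (X₂ ω t)) ≠ W ω}
        ≤ ENNReal.ofReal ε ∧
      mutualInfo2 μ W
          (fun ω => fun t => ldOut (max (max n₁ n₂) nE) nE nE (X₁ ω t) (X₂ ω t))
        ≤ ε * n

/-!
A single channel use already achieves the rate, with perfect secrecy. The message is written on
a set `T` of levels of `X₁` (level `t` is coordinate `t`, seen by the legitimate receiver at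
output level `q - n₁ + t` on top of helper level `t + n₂ - n₁`, and by the eavesdropper iff
`t < n_E`). The helper sends uniform noise on all of its levels except those landing on a
message level at the legitimate receiver, so `Y₁` reveals the message. The eavesdropper sees
`S^{q-n_E}(X₁ + X₂)`; if none of her visible message levels is a silenced helper level, each of
them is masked by fresh uniform noise, so translating the noise turns one message into any
other and `Y₂` is independent of `W`.

Such a `T` is obtained by taking, below `θ = min (n_E + (n₁ - n₂)) n₁` (truncated subtraction:
`θ = n_c` if `n₁ ≥ n₂` and `θ = n_c - n_Δ` otherwise), the even-numbered blocks of `n_Δ`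
consecutive levels, and every level from `θ` to `n₁`: a visible message level and the silenced
level `n_Δ` away both lie below `θ`, in blocks of different parity. Counting the even blocks gives
`|T| = R`.
-/

section Information

variable {Ω : Type*} [MeasurableSpace Ω] {μ : Measure Ω} [IsProbabilityMeasure μ]
  {α β : Type*} [Fintype α] [Fintype β] [MeasurableSpace α] [MeasurableSpace β]
  [MeasurableSingletonClass α] [MeasurableSingletonClass β] {X : Ω → α} {Y : Ω → β}

lemma sum_toReal_measure_preimage_singleton (hX : Measurable X) :
    ∑ a : α, (μ (X ⁻¹' {a})).toReal = 1 := by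
  simpa [Measure.real] using
    sum_measureReal_preimage_singleton (μ := μ) Finset.univ
      fun a _ => hX (measurableSet_singleton a)

lemma ProbabilityTheory.IndepFun.entropy2_prodMk (hXY : IndepFun X Y μ) (hX : Measurable X)
    (hY : Measurable Y) :
    entropy2 μ (fun ω => (X ω, Y ω)) = entropy2 μ X + entropy2 μ Y := by
  have hjoint : ∀ a b, (μ ((fun ω => (X ω, Y ω)) ⁻¹' {(a, b)})).toReal
      = (μ (X ⁻¹' {a})).toReal * (μ (Y ⁻¹' {b})).toReal := by
    intro a b
    rw [← Set.singleton_prod_singleton, Set.mk_preimage_prod,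
      hXY.measure_inter_preimage_eq_mul _ _ (measurableSet_singleton a)
        (measurableSet_singleton b), ENNReal.toReal_mul]
  simp only [entropy2, Fintype.sum_prod_type, hjoint, Real.negMulLog_mul, add_div,
    Finset.sum_add_distrib, mul_div_assoc, ← Finset.mul_sum, ← Finset.sum_mul,
    sum_toReal_measure_preimage_singleton hX, sum_toReal_measure_preimage_singleton hY,
    one_mul]

lemma ProbabilityTheory.IndepFun.mutualInfo2_eq_zero (hXY : IndepFun X Y μ) (hX : Measurable X)
    (hY : Measurable Y) : mutualInfo2 μ X Y = 0 := by
  rw [mutualInfo2, hXY.entropy2_prodMk hX hY]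
  ring

end Information

lemma uniformOn_univ_map_equiv {V : Type*} [MeasurableSpace V] [MeasurableSingletonClass V]
    [Fintype V] (σ : V ≃ V) :
    (uniformOn Set.univ : Measure V).map σ = uniformOn Set.univ := by
  ext s hs
  rw [Measure.map_apply (Measurable.of_discrete) hs, uniformOn_univ, uniformOn_univ,
    Measure.count_apply (Set.toFinite _).measurableSet, Measure.count_apply hs,
    Set.encard_preimage_of_bijective σ.bijective]

lemma indepFun_fst_of_forall_map_eq {M V β : Type*} [MeasurableSpace M] [MeasurableSpace V]
    [MeasurableSpace β] {μ₁ : Measure M} {μ₂ : Measure V} [IsProbabilityMeasure μ₁]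
    [IsProbabilityMeasure μ₂] {f : M → V → β} (hf : Measurable fun ω : M × V => f ω.1 ω.2)
    {ν : Measure β} (hlaw : ∀ m, μ₂.map (f m) = ν) :
    IndepFun Prod.fst (fun ω => f ω.1 ω.2) (μ₁.prod μ₂) := by
  have hslice : ∀ u t, MeasurableSet u → MeasurableSet t →
      (μ₁.prod μ₂) (Prod.fst ⁻¹' u ∩ (fun ω => f ω.1 ω.2) ⁻¹' t) = μ₁ u * ν t := by
    intro u t hu ht
    have hsection : ∀ m, μ₂ (Prod.mk m ⁻¹' (Prod.fst ⁻¹' u ∩ (fun ω => f ω.1 ω.2) ⁻¹' t))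
        = u.indicator (fun _ => ν t) m := by
      intro m
      by_cases hm : m ∈ u
      · have hset : Prod.mk m ⁻¹' (Prod.fst ⁻¹' u ∩ (fun ω => f ω.1 ω.2) ⁻¹' t) = f m ⁻¹' t := by
          ext v; simp [hm]
        rw [hset, Set.indicator_of_mem hm, ← hlaw m,
          Measure.map_apply (f := f m) (hf.comp measurable_prodMk_left) ht]
      · have hset : Prod.mk m ⁻¹' (Prod.fst ⁻¹' u ∩ (fun ω => f ω.1 ω.2) ⁻¹' t) = ∅ := by
          ext v; simp [hm]
        rw [hset, Set.indicator_of_notMem hm, measure_empty]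
    rw [Measure.prod_apply ((measurable_fst hu).inter (hf ht))]
    simp_rw [hsection]
    rw [lintegral_indicator_const hu, mul_comm]
  rw [indepFun_iff_measure_inter_preimage_eq_mul]
  intro s t hs ht
  have hsnd := hslice Set.univ t MeasurableSet.univ ht
  rw [Set.preimage_univ, Set.univ_inter, measure_univ, one_mul] at hsnd
  rw [hslice s t hs ht, hsnd, ← Set.prod_univ, Measure.prod_prod, measure_univ, mul_one]

section Shift

open Matrix

variable {q : ℕ}

lemma shiftMat_mulVec_apply (x : LDVec q) (i : Fin q) :
    (shiftMat q *ᵥ x) i = if h : 1 ≤ (i : ℕ) then x ⟨i - 1, by omega⟩ else 0 := by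
  simp only [Matrix.mulVec, dotProduct, shiftMat, Matrix.of_apply, ite_mul, one_mul, zero_mul]
  split_ifs with h
  · rw [Finset.sum_eq_single ⟨i - 1, by omega⟩ (fun j _ hj => if_neg fun hij => hj
      (Fin.ext (by simp; omega))) (by simp), if_pos (by simp; omega)]
  · exact Finset.sum_eq_zero fun j _ => if_neg (by omega)

lemma shiftMat_pow_mulVec_apply (p : ℕ) (x : LDVec q) (i : Fin q) :
    (shiftMat q ^ p *ᵥ x) i = if h : p ≤ (i : ℕ) then x ⟨i - p, by omega⟩ else 0 := by
  induction p generalizing i with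
  | zero => simp
  | succ p ih =>
    rw [pow_succ', ← Matrix.mulVec_mulVec, shiftMat_mulVec_apply]
    split_ifs
    · rw [ih, dif_pos (by simp; omega)]
      congr 1
      ext
      simp only
      omega
    · rw [ih, dif_neg (by simp; omega)]
    · omega
    · rfl

lemma shiftMat_pow_mulVec_congr {k : ℕ} {x y : LDVec q}
    (h : ∀ j : Fin q, (j : ℕ) < k → x j = y j) :
    shiftMat q ^ (q - k) *ᵥ x = shiftMat q ^ (q - k) *ᵥ y := by
  ext i
  simp only [shiftMat_pow_mulVec_apply]
  split_ifs
  · exact h _ (by simp; omega)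
  · rfl

lemma ldOut_apply_of_forall_eq_zero {k₁ k₂ t : ℕ} (h₁ : k₁ ≤ q) (h₂ : k₂ ≤ q) (ht : t < k₁)
    (x₁ x₂ : LDVec q) (hx₂ : ∀ j : Fin q, (j : ℕ) + k₁ = t + k₂ → x₂ j = 0) :
    ldOut q k₁ k₂ x₁ x₂ ⟨q - k₁ + t, by omega⟩ = x₁ ⟨t, by omega⟩ := by
  simp only [ldOut, Pi.add_apply, shiftMat_pow_mulVec_apply, Nat.add_sub_cancel_left]
  rw [dif_pos (Nat.le_add_right _ _), add_eq_left]
  split_ifs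
  · exact hx₂ _ (by simp; omega)
  · rfl

lemma ldOut_self (k : ℕ) (x₁ x₂ : LDVec q) :
    ldOut q k k x₁ x₂ = shiftMat q ^ (q - k) *ᵥ (x₁ + x₂) :=
  (Matrix.mulVec_add _ _ _).symm

end Shift

theorem ldWTHAchievable_of_oneShotCode {n₁ n₂ nE : ℕ} {R : ℝ} {M V : Type}
    [Fintype M] [Nonempty M] [MeasurableSpace M] [MeasurableSingletonClass M]
    [Fintype V] [Nonempty V] [MeasurableSpace V] [MeasurableSingletonClass V]
    (enc : M → LDVec (max (max n₁ n₂) nE)) (jam : V → LDVec (max (max n₁ n₂) nE))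
    (dec : LDVec (max (max n₁ n₂) nE) → M)
    (hdec : ∀ m v, dec (ldOut _ n₁ n₂ (enc m) (jam v)) = m)
    (hsec : ∀ m m', ∃ σ : V ≃ V,
      ∀ v, ldOut _ nE nE (enc m) (jam (σ v)) = ldOut _ nE nE (enc m') (jam v))
    (hR : 0 ≤ R) (hRM : (2 : ℝ) ^ R ≤ Fintype.card M) :
    ldWTHAchievable n₁ n₂ nE R := by
  classical
  let e := Fintype.equivFin M
  let μ : Measure (M × V) := (uniformOn Set.univ : Measure M).prod (uniformOn Set.univ)
  let eve : M → V → Fin 1 → LDVec (max (max n₁ n₂) nE) := fun m v _ =>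
    ldOut _ nE nE (enc m) (jam v)
  have hlaw : ∀ m, (uniformOn Set.univ : Measure V).map (eve m)
      = (uniformOn Set.univ : Measure V).map (eve (Classical.arbitrary M)) := by
    intro m
    obtain ⟨σ, hσ⟩ := hsec m (Classical.arbitrary M)
    rw [← uniformOn_univ_map_equiv σ, Measure.map_map .of_discrete .of_discrete,
      uniformOn_univ_map_equiv σ]
    congr 1
    funext v t
    exact hσ v
  have hindep : IndepFun (fun ω : M × V => e ω.1) (fun ω => eve ω.1 ω.2) μ :=
    (indepFun_fst_of_forall_map_eq .of_discrete hlaw).comp (φ := e) (ψ := id) .of_discrete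
      measurable_id
  refine ⟨hR, fun ε hε => ⟨1, one_pos, Fintype.card M, by simpa using hRM, M × V,
    inferInstance, μ, inferInstance, fun ω => e ω.1, fun ω _ => enc ω.1, fun ω _ => jam ω.2,
    fun y => e (dec (y 0)), ?_, ?_, ?_, ?_⟩⟩
  · intro i
    have : (fun ω : M × V => e ω.1) ⁻¹' {i} = {e.symm i} ×ˢ Set.univ := by
      ext ω; simp [Equiv.eq_symm_apply]
    rw [this, Measure.prod_prod, measure_univ, mul_one, uniformOn_univ,
      Measure.count_singleton, one_div]
  · exact indepFun_prod (X := fun m => (e m, fun _ : Fin 1 => enc m))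
      (Y := fun v => fun _ : Fin 1 => jam v) .of_discrete .of_discrete
  · simp [hdec]
  · rw [hindep.mutualInfo2_eq_zero .of_discrete .of_discrete]
    positivity

open Matrix in
theorem ldWTHAchievable_card_of_separated {n₁ n₂ nE : ℕ} (T : Finset ℕ) (hT : ∀ t ∈ T, t < n₁)
    (hsep : ∀ t ∈ T, t < nE → ∀ t' ∈ T, t + n₁ ≠ t' + n₂) :
    ldWTHAchievable n₁ n₂ nE T.card := by
  classical
  let q := max (max n₁ n₂) nE
  let enc : (T → ZMod 2) → LDVec q := fun b j => if h : (j : ℕ) ∈ T then b ⟨j, h⟩ else 0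
  let jam : LDVec q → LDVec q := fun v j => if ∃ t ∈ T, (j : ℕ) + n₁ = t + n₂ then 0 else v j
  let dec : LDVec q → T → ZMod 2 := fun y t => y ⟨q - n₁ + t, by have := hT t t.2; omega⟩
  have hjam_add : ∀ u v, jam (u + v) = jam u + jam v := by
    intro u v; ext j; simp only [jam, Pi.add_apply]; split_ifs <;> simp
  have hjam_enc :
      ∀ b, shiftMat q ^ (q - nE) *ᵥ jam (enc b) = shiftMat q ^ (q - nE) *ᵥ enc b := by
    refine fun b => shiftMat_pow_mulVec_congr fun j hj => ?_
    simp only [jam, enc]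
    split_ifs with hclash hjT
    · obtain ⟨t, ht, heq⟩ := hclash
      exact absurd heq (hsep j hjT hj t ht)
    all_goals rfl
  refine ldWTHAchievable_of_oneShotCode enc jam dec ?_ ?_ (Nat.cast_nonneg _) ?_
  · intro b v
    ext t
    dsimp only [dec]
    rw [ldOut_apply_of_forall_eq_zero (by omega) (by omega) (hT t t.2)]
    · simp [enc]
    · intro j hj
      simp only [jam]
      rw [if_pos ⟨t, t.2, hj⟩]
  · intro b b'
    refine ⟨Equiv.addRight (enc b + enc b'), fun v => ?_⟩
    simp only [ldOut_self, Equiv.coe_addRight, hjam_add, mulVec_add]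
    rw [hjam_enc, hjam_enc]
    have two_eq_zero : (2 : LDVec q) = 0 := funext fun _ => rfl
    linear_combination (shiftMat q ^ (q - nE) *ᵥ enc b) * two_eq_zero
  · simp [ZMod.card]

section EvenBlocks

variable {d : ℕ}

lemma count_even_div_of_le_two_mul {r : ℕ} (hr : r ≤ 2 * d) :
    Nat.count (fun t => Even (t / d)) r = min r d := by
  rcases le_total r d with h | h
  · rw [min_eq_left h]
    exact Nat.count_of_forall fun t ht => by rw [Nat.div_eq_of_lt (by omega)]; exact .zero
  · obtain ⟨s, rfl⟩ := Nat.exists_eq_add_of_le h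
    rw [min_eq_right h, Nat.count_add,
      Nat.count_of_forall fun t ht => by rw [Nat.div_eq_of_lt ht]; exact .zero,
      Nat.count_of_forall_not fun t ht => ?_, add_zero]
    rw [add_comm, Nat.add_div_right _ (by omega), Nat.div_eq_of_lt (by omega)]
    exact Nat.not_even_one

lemma count_even_div_two_mul_add (a : ℕ) {r : ℕ} (hr : r < 2 * d) :
    Nat.count (fun t => Even (t / d)) (2 * d * a + r) = a * d + min r d := by
  induction a with
  | zero => simpa using count_even_div_of_le_two_mul hr.le
  | succ a ih =>
    have hshift : ∀ k, Even ((2 * d + k) / d) ↔ Even (k / d) := fun k => by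
      rw [show 2 * d + k = k + d * 2 by ring, Nat.add_mul_div_left _ _ (by omega),
        Nat.even_add, iff_true_intro even_two, iff_true]
    rw [show 2 * d * (a + 1) + r = 2 * d + (2 * d * a + r) by ring, Nat.count_add]
    simp only [hshift, ih, count_even_div_of_le_two_mul le_rfl,
      min_eq_right (by omega : d ≤ 2 * d)]
    ring

lemma count_even_div (hd : 0 < d) (m : ℕ) :
    Nat.count (fun t => Even (t / d)) m = m / (2 * d) * d + min (m % (2 * d)) d := by
  conv_lhs => rw [← Nat.div_add_mod m (2 * d)]
  exact count_even_div_two_mul_add _ (Nat.mod_lt _ (by omega))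

lemma count_even_div_sub (hd : 0 < d) {m : ℕ} (hm : d ≤ m) :
    Nat.count (fun t => Even (t / d)) (m - d) = m / (2 * d) * d + (m % (2 * d) - d) := by
  have hdiv := Nat.div_add_mod m (2 * d)
  have hr := Nat.mod_lt m (show 0 < 2 * d by omega)
  generalize m / (2 * d) = a, m % (2 * d) = r at hdiv hr ⊢
  subst hdiv
  rcases le_or_gt d r with hdr | hrd
  · rw [show 2 * d * a + r - d = 2 * d * a + (r - d) by omega,
      count_even_div_two_mul_add _ (by omega), min_eq_left (by omega)]
  · obtain ⟨a, rfl⟩ : ∃ a', a = a' + 1 := Nat.exists_eq_succ_of_ne_zero (by rintro rfl; omega)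
    rw [show 2 * d * (a + 1) + r - d = 2 * d * a + (d + r) by rw [mul_add]; omega,
      count_even_div_two_mul_add _ (by omega), min_eq_right (by omega),
      Nat.sub_eq_zero_of_le hrd.le]
    ring

end EvenBlocks

def codePositions (d θ m : ℕ) : Finset ℕ :=
  (Finset.range θ).filter (fun t => Even (t / d)) ∪ Finset.Ico θ m

section CodePositions

variable {d θ m : ℕ}

lemma mem_codePositions {t : ℕ} :
    t ∈ codePositions d θ m ↔ t < θ ∧ Even (t / d) ∨ θ ≤ t ∧ t < m := by
  simp [codePositions]

lemma card_codePositions :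
    (codePositions d θ m).card = (m - θ) + Nat.count (fun t => Even (t / d)) θ := by
  rw [codePositions, Finset.card_union_of_disjoint, Nat.card_Ico,
    ← Nat.count_eq_card_filter_range, add_comm]
  exact Finset.disjoint_left.2 fun t ht ht' => by simp at ht ht'; omega

lemma le_of_mem_codePositions (hd : 0 < d) {t : ℕ} (ht : t ∈ codePositions d θ m)
    (ht' : t + d ∈ codePositions d θ m) : θ ≤ t + d := by
  rw [mem_codePositions] at ht ht'
  by_contra hlt
  have hodd : ¬ Even ((t + d) / d) := by
    rw [Nat.add_div_right _ hd, Nat.even_add_one, not_not]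
    exact (ht.resolve_right (by omega)).2
  exact hodd (ht'.resolve_right (by omega)).2

end CodePositions

/-- **Theorem 1.** For the LD-WT-H with `n₁ ≠ n₂` (so `n_Δ > 0`), the secrecy rate
`R = n_p + ⌊n_c / (2 n_Δ)⌋ · n_Δ + Q` is achievable, where `n_Q = n_c mod 2n_Δ` and
`Q = n_Q` if `n_Q < n_Δ` and `n₁ ≥ n₂`; `Q = n_Δ` if `n_Q ≥ n_Δ` and `n₁ ≥ n₂`;
`Q = 0` if `n_Q < n_Δ` and `n₁ < n₂`; `Q = n_Q − n_Δ` if `n_Q ≥ n_Δ` and `n₁ < n₂`. -/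
theorem ldWTH_rate_achievable (n₁ n₂ nE : ℕ) (hne : n₁ ≠ n₂)
    (nΔ nc np nQ Q : ℕ)
    (hΔ : nΔ = max n₁ n₂ - min n₁ n₂)
    (hc : nc = min (nE + nΔ) (max n₁ n₂))
    (hp : np = max n₁ n₂ - nc)
    (hQ : nQ = nc % (2 * nΔ))
    (hQdef : Q = if n₁ ≥ n₂ then (if nQ < nΔ then nQ else nΔ)
                 else (if nQ < nΔ then 0 else nQ - nΔ)) :
    ldWTHAchievable n₁ n₂ nE ((np + (nc / (2 * nΔ)) * nΔ + Q : ℕ) : ℝ) := by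
  have hd : 0 < nΔ := by omega
  set T := codePositions nΔ (min (nE + (n₁ - n₂)) n₁) n₁
  have hT : ∀ t ∈ T, t < n₁ := fun t ht => by rw [mem_codePositions] at ht; omega
  have hcard : T.card = np + nc / (2 * nΔ) * nΔ + Q := by
    rw [card_codePositions]
    by_cases h : n₂ ≤ n₁
    · rw [show min (nE + (n₁ - n₂)) n₁ = nc by omega, count_even_div hd]
      split_ifs at hQdef <;> omega
    · rw [show min (nE + (n₁ - n₂)) n₁ = nc - nΔ by omega, count_even_div_sub hd (by omega)]
      split_ifs at hQdef <;> omega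
  rw [← hcard]
  refine ldWTHAchievable_card_of_separated T hT fun t ht htE t' ht' heq => ?_
  rcases le_total n₂ n₁ with h | h
  · have := le_of_mem_codePositions hd ht ((by omega : t + nΔ = t') ▸ ht')
    have := hT t' ht'
    omega
  · have := le_of_mem_codePositions hd ht' ((by omega : t' + nΔ = t) ▸ ht)
    have := hT t ht
    omega
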